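/- arXiv:2209.02463 — 6 statements merged into one kernel-verified Lean document; each statement's English description precedes it below -/
import Mathlib

section
/- Let φ_x(x) = (x^5 - 8x^4 + 48x^3 - 512x + 1024)/(x^2(x-4)^2) and φ_y(x) = ((x^3 + 4x^2 + 16x - 64)(x^3 - 16x^2 + 64x - 128))/(x^3(x-4)^3) be rational functions over ℚ. Then as elements of the rational function field ℚ(x), one has φ_x(x)^3 - 4·φ_x(x)^2 - 160·φ_x(x) - 1264 = φ_y(x)^2 · (x^3 - 4x^2 + 16). -/
theorem RatFunc.X_sub_C_ne_zero {K : Type*} [Field K] (a : K) :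
    (RatFunc.X : RatFunc K) - RatFunc.C a ≠ 0 := by
  rw [← RatFunc.algebraMap_X, ← RatFunc.algebraMap_C, ← map_sub, ne_eq,
    FaithfulSMul.algebraMap_eq_zero_iff]
  exact Polynomial.X_sub_C_ne_zero a

/-- The coordinate functions of the 5-isogeny E1 → E2 (11a.3 → 11a.2) satisfy the
Weierstrass equation of E2 : y² = x³ - 4x² - 160x - 1264, given y² = x³ - 4x² + 16 on E1. -/
theorem stmt_0 :
    let x : RatFunc ℚ := RatFunc.X
    let φx : RatFunc ℚ := (x^5 - 8*x^4 + 48*x^3 - 512*x + 1024) / (x^2 * (x - 4)^2)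
    let φy : RatFunc ℚ :=
      ((x^3 + 4*x^2 + 16*x - 64) * (x^3 - 16*x^2 + 64*x - 128)) / (x^3 * (x - 4)^3)
    φx^3 - 4*φx^2 - 160*φx - 1264 = φy^2 * (x^3 - 4*x^2 + 16) := by
  intro x φx φy
  have hx : x ≠ 0 := RatFunc.X_ne_zero
  have hx4 : x - 4 ≠ 0 := by simpa using RatFunc.X_sub_C_ne_zero (4 : ℚ)
  simp only [φx, φy]
  field_simp [hx, hx4]
  ring
end

section
/- Let φ_x(x) = (x^6 + 5x^4 + 16x^3 - 5x^2 - 1)/(x(x+1)^2(x-1)^2) and φ_y(x) = ((x^2+1)(x^2-4x-1)(x^4+4x^3+6x^2-4x+1))/(x^2(x+1)^3(x-1)^3) be rational functions over ℚ. Then in ℚ(x) one has φ_x(x)^3 + φ_x(x)^2 - 36·φ_x(x) - 140 = φ_y(x)^2 · (x^3 + x^2 - x). -/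
theorem RatFunc.X_add_C_ne_zero {K : Type*} [Field K] (a : K) :
    (RatFunc.X : RatFunc K) + RatFunc.C a ≠ 0 := by
  rw [← RatFunc.algebraMap_X, ← RatFunc.algebraMap_C, ← map_add]
  exact (map_ne_zero_iff _ (IsFractionRing.injective _ _)).mpr (Polynomial.X_add_C_ne_zero a)

/-- The coordinate functions of the 6-isogeny E1 → E2 (20.a3 → 20.a2) satisfy the
Weierstrass equation of E2 : y² = x³ + x² - 36x - 140, given y² = x³ + x² - x on E1. -/
theorem stmt_1 :
    let x : RatFunc ℚ := RatFunc.X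
    let φx : RatFunc ℚ := (x^6 + 5*x^4 + 16*x^3 - 5*x^2 - 1) / (x * (x + 1)^2 * (x - 1)^2)
    let φy : RatFunc ℚ :=
      ((x^2 + 1) * (x^2 - 4*x - 1) * (x^4 + 4*x^3 + 6*x^2 - 4*x + 1)) /
        (x^2 * (x + 1)^3 * (x - 1)^3)
    φx^3 + φx^2 - 36*φx - 140 = φy^2 * (x^3 + x^2 - x) := by
  intro x φx φy
  have hx : x ≠ 0 := RatFunc.X_ne_zero
  have hx₁ : x + 1 ≠ 0 := by simpa using RatFunc.X_add_C_ne_zero (1 : ℚ)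
  have hx₂ : x - 1 ≠ 0 := by simpa [sub_eq_add_neg] using RatFunc.X_add_C_ne_zero (-1 : ℚ)
  simp only [φx, φy]
  field_simp
  ring
end

section
/- In ℚ(u)[x] define p⁺(x) = (1-u^3)x^8 - (10-3u^3)x^6 - 32x^5 - 3u^3 x^4 - 32x^3 + (10+u^3)x^2 - 1 and p⁻(x) = (1+u^3)x^8 - (10+3u^3)x^6 - 32x^5 + 3u^3 x^4 - 32x^3 + (10-u^3)x^2 - 1. Let φ_x(x) = (x^6 + 5x^4 + 16x^3 - 5x^2 - 1)/(x(x+1)^2(x-1)^2). Then in ℚ(u)(x) one has φ_x(x)^3 + φ_x(x)^2 - 36φ_x(x) - 140 - u^6(x^3 + x^2 - x) = p⁺(x)·p⁻(x)·(x^2 + x - 1) / (x^3(x+1)^6(x-1)^6). -/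
theorem isogeny_cubic_numerator_factorization {R : Type*} [CommRing R] (u x : R) :
    (x^6 + 5*x^4 + 16*x^3 - 5*x^2 - 1)^3
        + (x^6 + 5*x^4 + 16*x^3 - 5*x^2 - 1)^2 * (x * (x + 1)^2 * (x - 1)^2)
        - 36 * (x^6 + 5*x^4 + 16*x^3 - 5*x^2 - 1) * (x * (x + 1)^2 * (x - 1)^2)^2
        - (140 + u^6*(x^3 + x^2 - x)) * (x * (x + 1)^2 * (x - 1)^2)^3 =
      ((1 - u^3)*x^8 - (10 - 3*u^3)*x^6 - 32*x^5 - 3*u^3*x^4 - 32*x^3 + (10 + u^3)*x^2 - 1) *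
        ((1 + u^3)*x^8 - (10 + 3*u^3)*x^6 - 32*x^5 + 3*u^3*x^4 - 32*x^3 + (10 - u^3)*x^2 - 1) *
        (x^2 + x - 1) := by
  ring

/-- Factorization of the intersection of the cubic C_u with the degree-6 curve
x₂ = φ_x(x₁), in the rational function field ℚ(u)(x). -/
theorem stmt_3 :
    let u : RatFunc (RatFunc ℚ) := RatFunc.C RatFunc.X
    let x : RatFunc (RatFunc ℚ) := RatFunc.X
    let φx : RatFunc (RatFunc ℚ) :=
      (x^6 + 5*x^4 + 16*x^3 - 5*x^2 - 1) / (x * (x + 1)^2 * (x - 1)^2)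
    let pplus : RatFunc (RatFunc ℚ) :=
      (1 - u^3)*x^8 - (10 - 3*u^3)*x^6 - 32*x^5 - 3*u^3*x^4 - 32*x^3 + (10 + u^3)*x^2 - 1
    let pminus : RatFunc (RatFunc ℚ) :=
      (1 + u^3)*x^8 - (10 + 3*u^3)*x^6 - 32*x^5 + 3*u^3*x^4 - 32*x^3 + (10 - u^3)*x^2 - 1
    φx^3 + φx^2 - 36*φx - 140 - u^6*(x^3 + x^2 - x) =
      pplus * pminus * (x^2 + x - 1) / (x^3 * (x + 1)^6 * (x - 1)^6) := by
  intro u x φx pplus pminus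
  have hx : x ≠ 0 := RatFunc.X_ne_zero
  have hx_add_one : x + 1 ≠ 0 := by simpa using RatFunc.X_add_C_ne_zero (1 : RatFunc ℚ)
  have hx_sub_one : x - 1 ≠ 0 := by simpa using RatFunc.X_sub_C_ne_zero (1 : RatFunc ℚ)
  simp only [φx, pplus, pminus]
  field_simp
  linear_combination isogeny_cubic_numerator_factorization u x
end

section
/- Let q⁺(x1, x2, z) ∈ ℚ(u)[x1, x2, z] be the cubic form q⁺ = (u^9 + 2u^6 - 340u^3 + 1000)x1^3 + 5(u^6 - 12u^3 - 100)x1^2 x2 + 40u^3(u^3 - 5)x1^2 z + 12(u^3 - 10)x1 x2^2 + 4(19u^3 + 10)x1 x2 z - (u^9 - 10u^6 - 340u^3 - 2600)x1 z^2 + 4(u^3 + 10)x2^2 z - (u^6 - 32u^3 + 180)x2 z^2 - 4(u^6 + 10u^3 + 300)z^3. Let φ_x(x) = (x^6 + 5x^4 + 16x^3 - 5x^2 - 1)/(x(x+1)^2(x-1)^2) and p⁺(x) = (1-u^3)x^8 - (10-3u^3)x^6 - 32x^5 - 3u^3 x^4 - 32x^3 + (10+u^3)x^2 - 1. Then the numerator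 of the rational function q⁺(x, φ_x(x), 1), namely x^3(x+1)^6(x-1)^6 · q⁺(x, φ_x(x), 1), is divisible by p⁺(x) in ℚ(u)[x]. -/
/-!
Since q⁺ is a cubic form, clearing the denominator d = x(x+1)²(x-1)² of φ_x = n/d gives
d³ · q⁺(x, φ_x(x), 1) = q⁺(x·d, n, d). This is a polynomial identity in u and x, and
q⁺(x·d, n, d) factors as p⁺ times an explicit cofactor of degree 10 in x, so the identity
holds over every commutative ring.
-/

open Polynomial

section CommRing

variable {R : Type*} [CommRing R]

def qPlus (u x₁ x₂ z : R) : R :=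
  (u^9 + 2*u^6 - 340*u^3 + 1000) * x₁^3 + 5*(u^6 - 12*u^3 - 100) * x₁^2 * x₂
    + 40*u^3*(u^3 - 5) * x₁^2 * z + 12*(u^3 - 10) * x₁ * x₂^2 + 4*(19*u^3 + 10) * x₁ * x₂ * z
    - (u^9 - 10*u^6 - 340*u^3 - 2600) * x₁ * z^2 + 4*(u^3 + 10) * x₂^2 * z
    - (u^6 - 32*u^3 + 180) * x₂ * z^2 - 4*(u^6 + 10*u^3 + 300) * z^3

def phiNum (x : R) : R := x^6 + 5*x^4 + 16*x^3 - 5*x^2 - 1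

def phiDen (x : R) : R := x * (x + 1)^2 * (x - 1)^2

def pPlus (u x : R) : R :=
  (1 - u^3)*x^8 - (10 - 3*u^3)*x^6 - 32*x^5 - 3*u^3*x^4 - 32*x^3 + (10 + u^3)*x^2 - 1

-- The quotient of q⁺(x·d, n, d) by p⁺, computed by polynomial division over ℚ(u).
def pPlusCofactor (u x : R) : R :=
  (-40 - 4*u^3)*x + (-60 + 20*u^3 - u^6)*x^2 + (520 + 4*u^3)*x^3
    + (-360 - 68*u^3 + 4*u^6)*x^4 + (-840 - 36*u^3)*x^5 + (1280 + 68*u^3 - 6*u^6)*x^6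
    + (280 + 76*u^3)*x^7 + (-1240 - 12*u^3 + 4*u^6)*x^8 + (80 - 40*u^3)*x^9
    + (380 - 8*u^3 - u^6)*x^10

theorem qPlus_phi_eq_pPlus_mul_cofactor (u x : R) :
    qPlus u (x * phiDen x) (phiNum x) (phiDen x) = pPlus u x * pPlusCofactor u x := by
  unfold qPlus phiNum phiDen pPlus pPlusCofactor
  ring

end CommRing

/-- The numerator x³(x+1)⁶(x-1)⁶ · q⁺(x, φ_x(x), 1) of the auxiliary cubic of the
degree-6 example, evaluated along x₂ = φ_x(x₁), is divisible by p⁺(x) in ℚ(u)[x].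
Here the numerator is written by clearing the denominator d = x(x+1)²(x-1)² of φ_x
from the cubic form q⁺, so N = d³·q⁺(x, n/d, 1) with n the numerator of φ_x. -/
theorem stmt_7 :
    let u : Polynomial (RatFunc ℚ) := C RatFunc.X
    let x : Polynomial (RatFunc ℚ) := X
    let n : Polynomial (RatFunc ℚ) := x^6 + 5*x^4 + 16*x^3 - 5*x^2 - 1
    let d : Polynomial (RatFunc ℚ) := x * (x + 1)^2 * (x - 1)^2
    let pplus : Polynomial (RatFunc ℚ) :=
      (1 - u^3)*x^8 - (10 - 3*u^3)*x^6 - 32*x^5 - 3*u^3*x^4 - 32*x^3 + (10 + u^3)*x^2 - 1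
    let N : Polynomial (RatFunc ℚ) :=
      (u^9 + 2*u^6 - 340*u^3 + 1000) * x^3 * d^3
      + 5*(u^6 - 12*u^3 - 100) * x^2 * n * d^2
      + 40*u^3*(u^3 - 5) * x^2 * d^3
      + 12*(u^3 - 10) * x * n^2 * d
      + 4*(19*u^3 + 10) * x * n * d^2
      - (u^9 - 10*u^6 - 340*u^3 - 2600) * x * d^3
      + 4*(u^3 + 10) * n^2 * d
      - (u^6 - 32*u^3 + 180) * n * d^2
      - 4*(u^6 + 10*u^3 + 300) * d^3
    pplus ∣ N := by
  intro u x n d pplus N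
  have hN : N = qPlus u (x * phiDen x) (phiNum x) (phiDen x) := by
    simp only [N, qPlus, phiNum, phiDen, n, d]
    ring
  rw [hN, qPlus_phi_eq_pPlus_mul_cofactor]
  exact dvd_mul_right _ _
end

section
/- Define polynomials f, g, h ∈ ℚ[s] by: f(s) = 3s^10 + 4242s^9 + 2430679s^8 + 730135384s^7 + 129150804662s^6 + 16365054527404s^5 + 1890896931056342s^4 + 156511003892745304s^3 + 7628511948299823559s^2 + 194918754081273106962s + 2018249984797680027603; g(s) = s^14 + 2242s^13 + 2236395s^12 + 1318219892s^11 + 514922124233s^10 + 141266126525854s^9 + 27916724974734827s^8 + 3983998405505436120s^7 + 408728770355092602107s^6 + 30281648805286481009374s^5 + 1616046206494303287179993s^4 + 60571847938187268807626612s^3 + 1504534724917202541777070395s^2 + 22083100659160664074343947522s + 144209936106499234037676064081; h(s) = s(s+121)(5s^2 + 1958s + 73205). Then in ℚ(s), the point (X, Y) = (f(s)/(192 h(s)^2), (s-121)g(s)/(512 h(s)^3)) satisfies Y^2 = X^3 - (7936/3)X - 704s - 6082432/27 - 10307264/s. -/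
open Polynomial in
theorem RatFunc.algebraMap_ne_zero_of_eval_ne_zero {K : Type*} [Field K] {p : K[X]} {a : K}
    (hp : p.eval a ≠ 0) : algebraMap K[X] (RatFunc K) p ≠ 0 :=
  RatFunc.algebraMap_ne_zero (by rintro rfl; simp at hp)

theorem inose_denominator_ne_zero :
    (RatFunc.X * (RatFunc.X + 121) * (5 * RatFunc.X ^ 2 + 1958 * RatFunc.X + 73205) : RatFunc ℚ)
      ≠ 0 := by
  convert RatFunc.algebraMap_ne_zero_of_eval_ne_zero (K := ℚ) (a := 1)
    (p := .X * (.X + 121) * (5 * .X ^ 2 + 1958 * .X + 73205)) (by norm_num) using 1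
  simp only [map_mul, map_add, map_pow, map_ofNat, RatFunc.algebraMap_X]

/-- The section P_φ corresponding to the 5-isogeny satisfies the Weierstrass equation of
the Inose surface F⁽¹⁾ : Y² = X³ - (7936/3)X - 704s - 6082432/27 - 10307264/s. -/
theorem stmt_9 :
    let s : RatFunc ℚ := RatFunc.X
    let f : RatFunc ℚ :=
      3*s^10 + 4242*s^9 + 2430679*s^8 + 730135384*s^7 + 129150804662*s^6
      + 16365054527404*s^5 + 1890896931056342*s^4 + 156511003892745304*s^3
      + 7628511948299823559*s^2 + 194918754081273106962*s + 2018249984797680027603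
    let g : RatFunc ℚ :=
      s^14 + 2242*s^13 + 2236395*s^12 + 1318219892*s^11 + 514922124233*s^10
      + 141266126525854*s^9 + 27916724974734827*s^8 + 3983998405505436120*s^7
      + 408728770355092602107*s^6 + 30281648805286481009374*s^5
      + 1616046206494303287179993*s^4 + 60571847938187268807626612*s^3
      + 1504534724917202541777070395*s^2 + 22083100659160664074343947522*s
      + 144209936106499234037676064081
    let h : RatFunc ℚ := s * (s + 121) * (5*s^2 + 1958*s + 73205)
    let Xc : RatFunc ℚ := f / (192 * h^2)
    let Yc : RatFunc ℚ := (s - 121) * g / (512 * h^3)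
    Yc^2 = Xc^3 - (7936/3) * Xc - 704*s - 6082432/27 - 10307264/s := by
  intro s f g h Xc Yc
  have hs : s ≠ 0 := RatFunc.X_ne_zero
  have hh : h ≠ 0 := inose_denominator_ne_zero
  simp only [Xc, Yc]
  field_simp
  simp only [f, g, h]
  ring
end

section
/- Define f, g, h ∈ ℚ[s] by: f(s) = 3s^12 - 11568s^11 + 16300384s^10 - 9677907200s^9 + 2291334841600s^8 - 1084577868800000s^7 + 702031826176000000s^6 + 54228893440000000000s^5 + 5728337104000000000000s^4 + 1209738400000000000000000s^3 + 101877400000000000000000000s^2 + 3615000000000000000000000000s + 46875000000000000000000000000; g(s) = s^16 - 5784s^15 + 13675968s^14 - 16679958400s^13 + 10338144240640s^12 - 1473647335372800s^11 - 2426837586892800000s^10 + 1660357937152102400000s^9 - 221006891984578560000000s^8 - 83017896857605120000000000s^7 - 6067093967232000000000000000s^6 + 184205916921600000000000000000s^5 + 64613401504000000000000000000000s^4 + 5212487000000000000000000000000000s^3 + 213687000000000000000000000000000000s^2 + 4518750000000000000000000000000000000s + 39062500000000000000000000000000000000; h(s) = s(37s^4 - 51760s^3 + 8556000s^2 + 2588000000s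 + 92500000000). Then in ℚ(s), the point (X, Y) = (f(s)/(192 h(s)^2), -(s^2 + 50000)g(s)/(512 h(s)^3)) satisfies Y^2 = X^3 - (436/3)X + (5/4)s - 18997/27 - 62500/s. -/
/-!
Clearing the denominators `192 h²`, `512 h³` and `s` turns the Weierstrass equation into a
polynomial identity in `ℚ[s]`. Clearing them is legitimate because `h ≠ 0`: `s` is
transcendental over `ℚ` and the quartic factor of `h` has a nonzero constant term.
-/

open Polynomial in
theorem inose_quartic_ne_zero :
    (37 * RatFunc.X ^ 4 - 51760 * RatFunc.X ^ 3 + 8556000 * RatFunc.X ^ 2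
      + 2588000000 * RatFunc.X + 92500000000 : RatFunc ℚ) ≠ 0 := by
  intro h0
  refine RatFunc.transcendental_X (K := ℚ)
    ⟨37 * X ^ 4 - 51760 * X ^ 3 + 8556000 * X ^ 2 + 2588000000 * X + 92500000000, ?_, ?_⟩
  · intro hp
    simpa using congrArg (coeff · 0) hp
  · simpa [map_ofNat] using h0

theorem inose_weierstrass_of_cleared {K : Type*} [Field K] [CharZero K] {S H F N : K}
    (hS : S ≠ 0) (hH : H ≠ 0)
    -- the equation times `108 S (512 H³)²`, using `192³ = 27 · 512²` and `5357568 = 436 · 192² / 3`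
    (hcleared : 108 * S * N ^ 2
      = 4 * S * (F ^ 3 - 5357568 * H ^ 4 * F)
        + (135 * S ^ 2 - 75988 * S - 6750000) * (512 * H ^ 3) ^ 2) :
    (N / (512 * H ^ 3)) ^ 2
      = (F / (192 * H ^ 2)) ^ 3 - 436 / 3 * (F / (192 * H ^ 2))
        + 5 / 4 * S - 18997 / 27 - 62500 / S := by
  field_simp
  linear_combination (3 * 192 ^ 3) * hcleared

/-- The section P_φ corresponding to the 6-isogeny satisfies the Weierstrass equation of
the Inose surface F⁽¹⁾ : Y² = X³ - (436/3)X + (5/4)s - 18997/27 - 62500/s. -/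
theorem stmt_10 :
    let s : RatFunc ℚ := RatFunc.X
    let f : RatFunc ℚ :=
      3*s^12 - 11568*s^11 + 16300384*s^10 - 9677907200*s^9 + 2291334841600*s^8
      - 1084577868800000*s^7 + 702031826176000000*s^6 + 54228893440000000000*s^5
      + 5728337104000000000000*s^4 + 1209738400000000000000000*s^3
      + 101877400000000000000000000*s^2 + 3615000000000000000000000000*s
      + 46875000000000000000000000000
    let g : RatFunc ℚ :=
      s^16 - 5784*s^15 + 13675968*s^14 - 16679958400*s^13 + 10338144240640*s^12
      - 1473647335372800*s^11 - 2426837586892800000*s^10 + 1660357937152102400000*s^9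
      - 221006891984578560000000*s^8 - 83017896857605120000000000*s^7
      - 6067093967232000000000000000*s^6 + 184205916921600000000000000000*s^5
      + 64613401504000000000000000000000*s^4 + 5212487000000000000000000000000000*s^3
      + 213687000000000000000000000000000000*s^2
      + 4518750000000000000000000000000000000*s
      + 39062500000000000000000000000000000000
    let h : RatFunc ℚ :=
      s * (37*s^4 - 51760*s^3 + 8556000*s^2 + 2588000000*s + 92500000000)
    let Xc : RatFunc ℚ := f / (192 * h^2)
    let Yc : RatFunc ℚ := -((s^2 + 50000) * g) / (512 * h^3)
    Yc^2 = Xc^3 - (436/3) * Xc + (5/4)*s - 18997/27 - 62500/s := by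
  intro s f g h Xc Yc
  have hs : s ≠ 0 := RatFunc.X_ne_zero
  have hh : h ≠ 0 := mul_ne_zero hs inose_quartic_ne_zero
  exact inose_weierstrass_of_cleared hs hh (by simp only [f, g, h]; ring)
end
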